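/- Define f₁^#(x) := π ∑_{n=0}^∞ (−1)^n (n + 1/2) exp(−(n + 1/2)²π²x/2) for x > 0. Then for every real x > 0, f₁^#(x) = (2/(πx))^{3/2} · f₁^#(4/(π²x)). -/

import Mathlib

/-!
Up to constants, `f₁^#(x)` is both the odd theta kernel `∑_{n ∈ ℤ} (n + 1/4) e^{-π (n + 1/4)² t}`
at `t = 2πx` (the terms `n ≥ 0` and `n < 0` interleave as the even and odd terms of `f₁^#`) and
the sine kernel `∑_{n ≥ 1} 2n sin(πn/2) e^{-π n² t}` at `t = πx/8` (only odd `n` survive).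
Poisson summation, in the form `oddKernel_functional_equation`, exchanges these kernels under
`t ↦ 1/t`, and `1/(2πx) = πy/8` for `y = 4/(π²x)`.
-/

/-- `f₁^#(x) = π ∑_{n≥0} (−1)^n (n+1/2) e^{−(n+1/2)²π²x/2}`. -/
noncomputable def fOneSharp (x : ℝ) : ℝ :=
  Real.pi * ∑' n : ℕ, (-1 : ℝ) ^ n * ((n : ℝ) + 1 / 2) *
    Real.exp (-((n : ℝ) + 1 / 2) ^ 2 * Real.pi ^ 2 * x / 2)

open Real HurwitzZeta

noncomputable def fOneSharpTerm (x : ℝ) (k : ℕ) : ℝ :=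
  (-1) ^ k * ((k : ℝ) + 1 / 2) * exp (-((k : ℝ) + 1 / 2) ^ 2 * π ^ 2 * x / 2)

lemma sin_pi_div_two_mul_even (m : ℕ) : sin (π / 2 * (2 * m : ℕ)) = 0 := by
  rw [show π / 2 * ((2 * m : ℕ) : ℝ) = m * π by push_cast; ring, sin_nat_mul_pi]

lemma sin_pi_div_two_mul_odd (k : ℕ) : sin (π / 2 * (2 * k + 1 : ℕ)) = (-1) ^ k := by
  rw [show π / 2 * ((2 * k + 1 : ℕ) : ℝ) = k * π + π / 2 by push_cast; ring, sin_add_pi_div_two,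
    cos_nat_mul_pi]

lemma hasSum_fOneSharpTerm_sinKernel {x : ℝ} (hx : 0 < x) :
    HasSum (fOneSharpTerm x) (sinKernel (1 / 4 : ℝ) (π * x / 8) / 4) := by
  have hodd_inj : Function.Injective (fun k : ℕ ↦ 2 * k + 1) := fun a b h ↦ by simpa using h
  have hsin := hasSum_nat_sinKernel (1 / 4 : ℝ) (by positivity : 0 < π * x / 8)
  rw [← hodd_inj.hasSum_iff] at hsin
  · refine (hsin.div_const 4).congr_fun fun k ↦ ?_
    rw [Function.comp_apply, show 2 * π * (1 / 4) = π / 2 by ring, sin_pi_div_two_mul_odd,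
      fOneSharpTerm]
    push_cast
    ring_nf
  · rintro n hn
    obtain ⟨m, rfl⟩ : Even n := Nat.not_odd_iff_even.mp fun ⟨m, hm⟩ ↦ hn ⟨m, hm.symm⟩
    rw [show 2 * π * (1 / 4) = π / 2 by ring, ← two_mul, sin_pi_div_two_mul_even]
    ring

lemma hasSum_fOneSharpTerm_oddKernel {x : ℝ} (hx : 0 < x) :
    HasSum (fOneSharpTerm x) (2 * oddKernel (1 / 4 : ℝ) (2 * π * x)) := by
  have hhalf : HasSum (fun k ↦ fOneSharpTerm x k / 2) (oddKernel (1 / 4 : ℝ) (2 * π * x)) := by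
    rw [← Equiv.intEquivNat.hasSum_iff]
    refine (hasSum_int_oddKernel (1 / 4 : ℝ) (by positivity : 0 < 2 * π * x)).congr_fun ?_
    rintro (n | n)
    · change fOneSharpTerm x (2 * n) / 2 = _
      rw [fOneSharpTerm, pow_mul, Int.ofNat_eq_natCast]
      push_cast
      ring_nf
    · change fOneSharpTerm x (2 * n + 1) / 2 = _
      rw [fOneSharpTerm, pow_succ, pow_mul]
      push_cast
      ring_nf
  simpa [mul_div_cancel₀] using hhalf.mul_left 2

lemma fOneSharp_eq_pi_mul_tsum (x : ℝ) : fOneSharp x = π * ∑' k, fOneSharpTerm x k := rfl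

lemma fOneSharp_eq_sinKernel {x : ℝ} (hx : 0 < x) :
    fOneSharp x = π / 4 * sinKernel (1 / 4 : ℝ) (π * x / 8) := by
  rw [fOneSharp_eq_pi_mul_tsum, (hasSum_fOneSharpTerm_sinKernel hx).tsum_eq]
  ring

lemma fOneSharp_eq_oddKernel {x : ℝ} (hx : 0 < x) :
    fOneSharp x = 2 * π * oddKernel (1 / 4 : ℝ) (2 * π * x) := by
  rw [fOneSharp_eq_pi_mul_tsum, (hasSum_fOneSharpTerm_oddKernel hx).tsum_eq]
  ring

lemma eight_div_rpow_three_halves {t : ℝ} (ht : 0 < t) :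
    8 / (2 * t) ^ ((3 : ℝ) / 2) = (2 / t) ^ ((3 : ℝ) / 2) := by
  have h8 : (4 : ℝ) ^ ((3 : ℝ) / 2) = 8 := by
    rw [show (4 : ℝ) = 2 ^ (2 : ℝ) by norm_num, ← rpow_mul (by norm_num)]
    norm_num
  rw [← h8, ← div_rpow (by norm_num) (by positivity)]
  congr 1
  field_simp
  ring

/-- The Ciesielski–Taylor self-reciprocal relation:
`f₁^#(x) = (2/(πx))^{3/2} f₁^#(4/(π²x))` for `x > 0`. -/
theorem fOneSharp_self_reciprocal (x : ℝ) (hx : 0 < x) :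
    fOneSharp x = (2 / (Real.pi * x)) ^ ((3 : ℝ) / 2) * fOneSharp (4 / (Real.pi ^ 2 * x)) := by
  have hy : 0 < 4 / (π ^ 2 * x) := by positivity
  have harg : π * (4 / (π ^ 2 * x)) / 8 = 1 / (2 * π * x) := by
    field_simp
    ring
  calc fOneSharp x = 2 * π * oddKernel (1 / 4 : ℝ) (2 * π * x) := fOneSharp_eq_oddKernel hx
    _ = 8 / (2 * (π * x)) ^ ((3 : ℝ) / 2) * (π / 4 * sinKernel (1 / 4 : ℝ) (1 / (2 * π * x))) := by
      rw [oddKernel_functional_equation, ← mul_assoc 2 π x]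
      ring
    _ = (2 / (π * x)) ^ ((3 : ℝ) / 2) * fOneSharp (4 / (π ^ 2 * x)) := by
      rw [eight_div_rpow_three_halves (by positivity), fOneSharp_eq_sinKernel hy, harg]
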